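/- arXiv:2403.06756 — 2 statements merged into one kernel-verified Lean document; each statement's English description precedes it below -/
import Mathlib

section
/- Let m ≥ 1 be an integer and let C ∈ ℝ^{2m×2m} be symmetric positive definite with T1ᵀ C T1 = C. Then for every τ ∈ {−1,1}^{2m}, P(0_{2m}, Γ_{T1τ} C Γ_{T1τ}) = P(0_{2m}, Γ_τ C Γ_τ), where Γ_τ = diag(τ). -/
open MeasureTheory Real Matrix

/-- Multivariate Gaussian density `φ(x; μ, S)` on `ι → ℝ`. -/
noncomputable def gaussDensity {ι : Type*} [Fintype ι] [DecidableEq ι] (μ : ι → ℝ) (S : Matrix ι ι ℝ)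
    (x : ι → ℝ) : ℝ :=
  (2 * π) ^ (-(Fintype.card ι : ℝ) / 2) * S.det ^ (-(1 : ℝ) / 2) *
    Real.exp (-(1 / 2) * ((x - μ) ⬝ᵥ (S⁻¹ *ᵥ (x - μ))))

/-- Orthant probability `P(μ, S) = ∫_{(0,∞)^k} φ(x; μ, S) dx`. -/
noncomputable def orthantProb {ι : Type*} [Fintype ι] [DecidableEq ι] (μ : ι → ℝ) (S : Matrix ι ι ℝ) : ℝ :=
  ∫ x in {x : ι → ℝ | ∀ i, 0 < x i}, gaussDensity μ S x

/-- Schur complement `R(S, l) = Θ(S, l) − (1/S l l) r_l r_lᵀ`, indexed by `{i // i ≠ l}`. -/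
noncomputable def schurR {ι : Type*} (S : Matrix ι ι ℝ) (l : ι) :
    Matrix {i : ι // i ≠ l} {i : ι // i ≠ l} ℝ :=
  fun i j => S i.1 j.1 - S i.1 l * S j.1 l / S l l

/-- The vector `d(τ)` with `d(τ)(l) = τ(l) (2π S l l)^{-1/2} P(0, R(Γ_τ S Γ_τ, l))`. -/
noncomputable def dvec {ι : Type*} [Fintype ι] [DecidableEq ι] (S : Matrix ι ι ℝ)
    (τ : ι → ℝ) : ι → ℝ :=
  fun l => τ l * (2 * π * S l l) ^ (-(1 : ℝ) / 2) *
    orthantProb (0 : {i : ι // i ≠ l} → ℝ)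
      (schurR (Matrix.diagonal τ * S * Matrix.diagonal τ) l)

/-- The block matrix `T1 = [[0, I_m], [−I_m, 0]]` on `Fin m ⊕ Fin m`. -/
noncomputable def T1 (m : ℕ) : Matrix (Fin m ⊕ Fin m) (Fin m ⊕ Fin m) ℝ :=
  Matrix.fromBlocks 0 1 (-1) 0

/-!
`T1` is a signed permutation matrix: it swaps the two blocks of coordinates, with a sign
`t1Sign`. Invariance of `C` under `T1` says that swapping the coordinates changes the entries of `C`
by exactly these signs, and they cancel against the signs in `Γ_{T1τ}`. Hence
`Γ_{T1τ} C Γ_{T1τ}` is `Γ_τ C Γ_τ` with the two blocks of coordinates swapped, and an orthant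
probability is invariant under permuting coordinates, since both the orthant and Lebesgue measure
are.
-/

section Permutation

variable {ι κ : Type*} [Fintype ι] [DecidableEq ι] [Fintype κ] [DecidableEq κ]

theorem gaussDensity_comp_equiv (μ : κ → ℝ) (S : Matrix κ κ ℝ) (e : ι ≃ κ) (x : κ → ℝ) :
    gaussDensity (μ ∘ e) (S.submatrix e e) (x ∘ e) = gaussDensity μ S x := by
  have hquad : (x ∘ e - μ ∘ e) ⬝ᵥ ((S.submatrix e e)⁻¹ *ᵥ (x ∘ e - μ ∘ e)) =
      (x - μ) ⬝ᵥ (S⁻¹ *ᵥ (x - μ)) := by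
    rw [inv_submatrix_equiv, ← Pi.sub_comp, submatrix_mulVec_equiv, Function.comp_assoc,
      e.self_comp_symm, Function.comp_id, comp_equiv_dotProduct_comp_equiv]
  rw [gaussDensity, gaussDensity, hquad, det_submatrix_equiv_self, Fintype.card_congr e]

theorem orthantProb_submatrix_equiv (μ : κ → ℝ) (S : Matrix κ κ ℝ) (e : ι ≃ κ) :
    orthantProb (μ ∘ e) (S.submatrix e e) = orthantProb μ S := by
  let φ := MeasurableEquiv.piCongrLeft (fun _ : κ => ℝ) e
  have hφ : ∀ y : ι → ℝ, φ y = y ∘ e.symm := fun y => by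
    ext i
    rw [MeasurableEquiv.coe_piCongrLeft]
    simpa using Equiv.piCongrLeft_apply_apply (fun _ : κ => ℝ) e y (e.symm i)
  have hpre : φ ⁻¹' {x | ∀ k, 0 < x k} = {y | ∀ i, 0 < y i} := by
    ext y
    simp only [Set.mem_preimage, Set.mem_ofPred_eq, hφ, Function.comp_apply,
      e.forall_congr_left]
  rw [orthantProb, orthantProb, ← (volume_measurePreserving_piCongrLeft (fun _ : κ => ℝ) e)
    |>.setIntegral_preimage_emb φ.measurableEmbedding, hpre]
  congr 1 with y
  rw [hφ, ← gaussDensity_comp_equiv μ S e, Function.comp_assoc, e.symm_comp_self,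
    Function.comp_id]

theorem diagonal_mul_mul_diagonal_eq_submatrix (C : Matrix ι ι ℝ) (σ : ι ≃ ι) (s τ : ι → ℝ)
    (hC : ∀ i j, s i * s j * C i j = C (σ i) (σ j)) :
    diagonal (fun i => s i * τ (σ i)) * C * diagonal (fun i => s i * τ (σ i)) =
      (diagonal τ * C * diagonal τ).submatrix σ σ := by
  ext i j
  simp only [submatrix_apply, mul_diagonal, diagonal_mul, ← hC]
  ring

end Permutation

section T1

variable {m : ℕ}

/-- `T1 m = diagonal (t1Sign m) * (Equiv.sumComm _ _).toPEquiv.toMatrix`. -/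
def t1Sign (m : ℕ) : Fin m ⊕ Fin m → ℝ := Sum.elim 1 (-1)

theorem T1_mulVec_apply (τ : Fin m ⊕ Fin m → ℝ) (i : Fin m ⊕ Fin m) :
    (T1 m *ᵥ τ) i = t1Sign m i * τ (Equiv.sumComm _ _ i) := by
  cases i <;> simp [T1, t1Sign, mulVec, dotProduct, Fintype.sum_sum_type, one_apply]

theorem transpose_T1_mul_mul_T1_apply (C : Matrix (Fin m ⊕ Fin m) (Fin m ⊕ Fin m) ℝ)
    (i j : Fin m ⊕ Fin m) :
    ((T1 m)ᵀ * C * T1 m) i j =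
      t1Sign m i * t1Sign m j * C (Equiv.sumComm _ _ i) (Equiv.sumComm _ _ j) := by
  cases i <;> cases j <;> simp [T1, t1Sign, mul_apply, Fintype.sum_sum_type, one_apply]

theorem t1Sign_mul_mul_apply_of_T1_invariant {C : Matrix (Fin m ⊕ Fin m) (Fin m ⊕ Fin m) ℝ}
    (hT : (T1 m)ᵀ * C * T1 m = C) (i j : Fin m ⊕ Fin m) :
    t1Sign m i * t1Sign m j * C i j = C (Equiv.sumComm _ _ i) (Equiv.sumComm _ _ j) := by
  conv_lhs => rw [← hT, transpose_T1_mul_mul_T1_apply]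
  cases i <;> cases j <;> simp [t1Sign]

end T1

theorem stmt5_general {m : ℕ} (C : Matrix (Fin m ⊕ Fin m) (Fin m ⊕ Fin m) ℝ)
    (hT : (T1 m)ᵀ * C * T1 m = C)
    (τ : Fin m ⊕ Fin m → ℝ) :
    orthantProb (0 : Fin m ⊕ Fin m → ℝ)
        (Matrix.diagonal (T1 m *ᵥ τ) * C * Matrix.diagonal (T1 m *ᵥ τ)) =
      orthantProb (0 : Fin m ⊕ Fin m → ℝ) (Matrix.diagonal τ * C * Matrix.diagonal τ) := by
  rw [funext (T1_mulVec_apply τ), diagonal_mul_mul_diagonal_eq_submatrix C _ _ τ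
    (t1Sign_mul_mul_apply_of_T1_invariant hT)]
  exact orthantProb_submatrix_equiv 0 _ _

/-- if `C` is symmetric positive definite with `T1ᵀ C T1 = C`, then for every
sign vector `τ`, `P(0, Γ_{T1τ} C Γ_{T1τ}) = P(0, Γ_τ C Γ_τ)`. -/
theorem stmt5 {m : ℕ} (hm : 1 ≤ m) (C : Matrix (Fin m ⊕ Fin m) (Fin m ⊕ Fin m) ℝ)
    (hC : C.PosDef) (hT : (T1 m)ᵀ * C * T1 m = C)
    (τ : Fin m ⊕ Fin m → ℝ) (hτ : ∀ i, τ i = 1 ∨ τ i = -1) :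
    orthantProb (0 : Fin m ⊕ Fin m → ℝ)
        (Matrix.diagonal (T1 m *ᵥ τ) * C * Matrix.diagonal (T1 m *ᵥ τ)) =
      orthantProb (0 : Fin m ⊕ Fin m → ℝ) (Matrix.diagonal τ * C * Matrix.diagonal τ) :=
  stmt5_general C hT τ
end

section
/- Let J be a finite set, σ : J → J a bijection, O : J → (0,∞) a function with O(σ(j)) = O(j) for all j, and T ∈ ℝ^{n×n} with Tᵀ T = I_n and T² = −I_n. Let d : J → ℝⁿ satisfy d(σ(j)) = T · d(j) for all j, let a ∈ ℝⁿ and set b = −T a. Then ∑_{j∈J} (aᵀ d(j))(bᵀ d(j)) / O(j) = 0 and ∑_{j∈J} (aᵀ d(j))² / O(j) = ∑_{j∈J} (bᵀ d(j))² / O(j). (These identities imply that the Fisher information matrix of the one-bit detection problem is a scalar multiple υ² of the 2×2 identity matrix.) -/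
open Matrix

/-! The rotation `T` is skew (`Tᵀ = -T`) and orthogonal, so `σ` sends the pair
`(aᵀ d_j, bᵀ d_j)` to `(bᵀ d_j, -aᵀ d_j)`. Reindexing the sums along `σ`, which preserves `O`,
turns the mixed sum into its own negative and the `a`-sum into the `b`-sum. -/

theorem eq_neg_of_mul_eq_one_of_mul_self_eq_neg_one {R : Type*} [Monoid R] [HasDistribNeg R]
    {x y : R} (hxy : x * y = 1) (hy : y * y = -1) : x = -y :=
  calc x = -(x * y * y) := by rw [mul_assoc, hy, mul_neg, mul_one, neg_neg]
    _ = -y := by rw [hxy, one_mul]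

namespace Matrix

variable {m R : Type*} [Fintype m] [CommRing R] {T : Matrix m m R}

theorem dotProduct_mulVec_of_transpose_eq_neg (hT : Tᵀ = -T) (a v : m → R) :
    a ⬝ᵥ (T *ᵥ v) = -(T *ᵥ a) ⬝ᵥ v := by
  rw [dotProduct_mulVec, ← mulVec_transpose, hT, neg_mulVec]

theorem mulVec_dotProduct_mulVec_of_transpose_mul_self_eq_one [DecidableEq m]
    (hT : Tᵀ * T = 1) (a v : m → R) : (T *ᵥ a) ⬝ᵥ (T *ᵥ v) = a ⬝ᵥ v := by
  rw [dotProduct_mulVec, ← mulVec_transpose, mulVec_mulVec, hT, one_mulVec]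

end Matrix

theorem Equiv.sum_eq_zero_of_comp_eq_neg {ι G : Type*} [Fintype ι] [AddCommGroup G]
    [IsAddTorsionFree G] (σ : ι ≃ ι) {f : ι → G} (hf : ∀ i, f (σ i) = -f i) :
    ∑ i, f i = 0 := by
  rw [← self_eq_neg]
  calc ∑ i, f i = ∑ i, f (σ i) := (σ.sum_comp f).symm
    _ = -∑ i, f i := by simp only [hf, Finset.sum_neg_distrib]

theorem stmt8_general {J : Type*} [Fintype J] (σ : J ≃ J) (O : J → ℝ)
    (hOσ : ∀ j, O (σ j) = O j) {n : ℕ} (T : Matrix (Fin n) (Fin n) ℝ)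
    (hT1 : Tᵀ * T = 1) (hT2 : T * T = -1)
    (d : J → Fin n → ℝ) (hd : ∀ j, d (σ j) = T *ᵥ d j)
    (a b : Fin n → ℝ) (hb : b = -(T *ᵥ a)) :
    (∑ j, (a ⬝ᵥ d j) * (b ⬝ᵥ d j) / O j) = 0 ∧
    (∑ j, (a ⬝ᵥ d j) ^ 2 / O j) = ∑ j, (b ⬝ᵥ d j) ^ 2 / O j := by
  have hT : Tᵀ = -T := eq_neg_of_mul_eq_one_of_mul_self_eq_neg_one hT1 hT2
  have ha_σ : ∀ j, a ⬝ᵥ d (σ j) = b ⬝ᵥ d j := fun j => by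
    rw [hd, dotProduct_mulVec_of_transpose_eq_neg hT, hb]
  have hb_σ : ∀ j, b ⬝ᵥ d (σ j) = -(a ⬝ᵥ d j) := fun j => by
    rw [hd, hb, neg_dotProduct, mulVec_dotProduct_mulVec_of_transpose_mul_self_eq_one hT1]
  constructor
  · exact σ.sum_eq_zero_of_comp_eq_neg fun j => by rw [ha_σ, hb_σ, hOσ]; ring
  · calc ∑ j, (a ⬝ᵥ d j) ^ 2 / O j = ∑ j, (a ⬝ᵥ d (σ j)) ^ 2 / O (σ j) :=
          (σ.sum_comp _).symm
      _ = ∑ j, (b ⬝ᵥ d j) ^ 2 / O j := by simp only [ha_σ, hOσ]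

/-- for a finite set `J`, a bijection `σ` of `J`, positive weights `O` with
`O(σ j) = O j`, a matrix `T` with `TᵀT = I`, `T² = −I`, vectors `d j` with `d(σ j) = T d(j)`,
and `b = −T a`: `∑_j (aᵀ d_j)(bᵀ d_j)/O_j = 0` and `∑_j (aᵀ d_j)²/O_j = ∑_j (bᵀ d_j)²/O_j`. -/
theorem stmt8 {J : Type*} [Fintype J] (σ : J ≃ J) (O : J → ℝ) (hO : ∀ j, 0 < O j)
    (hOσ : ∀ j, O (σ j) = O j) {n : ℕ} (T : Matrix (Fin n) (Fin n) ℝ)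
    (hT1 : Tᵀ * T = 1) (hT2 : T * T = -1)
    (d : J → Fin n → ℝ) (hd : ∀ j, d (σ j) = T *ᵥ d j)
    (a b : Fin n → ℝ) (hb : b = -(T *ᵥ a)) :
    (∑ j, (a ⬝ᵥ d j) * (b ⬝ᵥ d j) / O j) = 0 ∧
    (∑ j, (a ⬝ᵥ d j) ^ 2 / O j) = ∑ j, (b ⬝ᵥ d j) ^ 2 / O j :=
  stmt8_general σ O hOσ T hT1 hT2 d hd a b hb
end
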